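/- arXiv:2109.06193 — 5 statements merged into one kernel-verified Lean document; each statement's English description precedes it below -/
import Mathlib

section
/- Let U ⊆ ℝ² be an open set contained in {(σ,η) : σ ≠ 0} and let V̂ : ℝ² → ℝ be twice continuously differentiable on U with ∂²V̂/∂σ² + ∂²V̂/∂η² = 0 on U. Then the function V(σ,η) = V̂(σ,η)/σ satisfies the master equation ∂/∂σ (σ² ∂V/∂σ) + σ² ∂²V/∂η² = 0 at every point of U. -/
/-! Since `σ² ∂_σ(V̂/σ) = σ ∂_σV̂ - V̂`, differentiating once more gives `σ ∂²_σV̂`, while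
`σ² ∂²_η(V̂/σ) = σ ∂²_ηV̂`. Hence the left side of the master equation is `σ ΔV̂`. -/

/-- Partial derivative with respect to the first variable σ. -/
noncomputable def pderivFst (f : ℝ × ℝ → ℝ) : ℝ × ℝ → ℝ :=
  fun p => deriv (fun s => f (s, p.2)) p.1

/-- Partial derivative with respect to the second variable η. -/
noncomputable def pderivSnd (f : ℝ × ℝ → ℝ) : ℝ × ℝ → ℝ :=
  fun p => deriv (fun t => f (p.1, t)) p.2

open Filter Topology

section PartialDerivatives

variable {f g : ℝ × ℝ → ℝ} {p : ℝ × ℝ}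

theorem DifferentiableAt.hasDerivAt_pderivFst (h : DifferentiableAt ℝ f p) :
    HasDerivAt (fun s => f (s, p.2)) (pderivFst f p) p.1 := by
  obtain ⟨a, b⟩ := p
  exact (h.comp a (differentiableAt_id.prodMk (differentiableAt_const b))).hasDerivAt

theorem DifferentiableAt.pderivFst_eq_fderiv (h : DifferentiableAt ℝ f p) :
    pderivFst f p = fderiv ℝ f p (1, 0) := by
  obtain ⟨a, b⟩ := p
  exact (h.hasFDerivAt.comp_hasDerivAt a ((hasDerivAt_id a).prodMk (hasDerivAt_const a b))).deriv

theorem pderivFst_congr_of_eventuallyEq (h : f =ᶠ[𝓝 p] g) : pderivFst f p = pderivFst g p := by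
  obtain ⟨a, b⟩ := p
  have hline : Tendsto (fun s : ℝ => (s, b)) (𝓝 a) (𝓝 (a, b)) :=
    (continuous_id.prodMk continuous_const).continuousAt.tendsto
  exact (h.comp_tendsto hline).deriv_eq

theorem pderivSnd_div_fst (f : ℝ × ℝ → ℝ) :
    pderivSnd (fun r => f r / r.1) = fun r => pderivSnd f r / r.1 := by
  funext r
  exact deriv_div_const _

theorem ContDiffAt.differentiableAt_pderivFst (h : ContDiffAt ℝ 2 f p) :
    DifferentiableAt ℝ (pderivFst f) p := by
  have hfderiv : DifferentiableAt ℝ (fun q => fderiv ℝ f q (1, 0)) p :=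
    ((h.fderiv_right (m := 1) (by norm_num)).differentiableAt one_ne_zero).clm_apply
      (differentiableAt_const _)
  refine hfderiv.congr_of_eventuallyEq ?_
  filter_upwards [h.eventually (by simp)] with q hq
  exact (hq.differentiableAt two_ne_zero).pderivFst_eq_fderiv

theorem DifferentiableAt.sq_mul_pderivFst_div_fst (h : DifferentiableAt ℝ f p) (hp : p.1 ≠ 0) :
    p.1 ^ 2 * pderivFst (fun r => f r / r.1) p = p.1 * pderivFst f p - f p := by
  have hquot : HasDerivAt (fun s => f (s, p.2) / s)
      ((pderivFst f p * p.1 - f p * 1) / p.1 ^ 2) p.1 :=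
    h.hasDerivAt_pderivFst.div (hasDerivAt_id p.1) hp
  rw [pderivFst, hquot.deriv]
  field_simp

theorem pderivFst_fst_mul_pderivFst_sub (hf : DifferentiableAt ℝ f p)
    (hf' : DifferentiableAt ℝ (pderivFst f) p) :
    pderivFst (fun q => q.1 * pderivFst f q - f q) p = p.1 * pderivFst (pderivFst f) p := by
  have hline : HasDerivAt (fun s => s * pderivFst f (s, p.2) - f (s, p.2))
      (1 * pderivFst f p + p.1 * pderivFst (pderivFst f) p - pderivFst f p) p.1 :=
    ((hasDerivAt_id' p.1).mul hf'.hasDerivAt_pderivFst).sub hf.hasDerivAt_pderivFst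
  rw [pderivFst, hline.deriv]
  ring

theorem ContDiffAt.master_eq_div_fst (hf : ContDiffAt ℝ 2 f p) (hp : p.1 ≠ 0) :
    pderivFst (fun q => q.1 ^ 2 * pderivFst (fun r => f r / r.1) q) p
        + p.1 ^ 2 * pderivSnd (pderivSnd (fun r => f r / r.1)) p
      = p.1 * (pderivFst (pderivFst f) p + pderivSnd (pderivSnd f) p) := by
  have hfirst : (fun q => q.1 ^ 2 * pderivFst (fun r => f r / r.1) q)
      =ᶠ[𝓝 p] fun q => q.1 * pderivFst f q - f q := by
    filter_upwards [hf.eventually (by simp), continuousAt_fst.eventually_ne hp] with q hq hq0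
    exact (hq.differentiableAt two_ne_zero).sq_mul_pderivFst_div_fst hq0
  rw [pderivFst_congr_of_eventuallyEq hfirst,
    pderivFst_fst_mul_pderivFst_sub (hf.differentiableAt two_ne_zero)
      hf.differentiableAt_pderivFst,
    pderivSnd_div_fst, pderivSnd_div_fst]
  field_simp

end PartialDerivatives

/-- If `V̂` is harmonic and C² on an open set `U` avoiding `σ = 0`, then
`V = V̂/σ` satisfies the master equation `∂_σ(σ² ∂_σ V) + σ² ∂²_η V = 0` on `U`. -/
theorem stmt0 (U : Set (ℝ × ℝ)) (hU : IsOpen U) (hU0 : ∀ p ∈ U, p.1 ≠ 0)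
    (Vhat : ℝ × ℝ → ℝ) (hC2 : ContDiffOn ℝ 2 Vhat U)
    (hharm : ∀ p ∈ U, pderivFst (pderivFst Vhat) p + pderivSnd (pderivSnd Vhat) p = 0) :
    ∀ p ∈ U,
      pderivFst (fun q => q.1 ^ 2 * pderivFst (fun r => Vhat r / r.1) q) p
        + p.1 ^ 2 * pderivSnd (pderivSnd (fun r => Vhat r / r.1)) p = 0 := by
  intro p hp
  rw [(hC2.contDiffAt (hU.mem_nhds hp)).master_eq_div_fst (hU0 p hp), hharm p hp, mul_zero]
end

section
/- Fix an integer P ≥ 2 and real numbers N_0, N_1, …, N_P with N_0 = 0 and N_P = 0, and let R : [0, P] → ℝ be the rank function with Fourier sine coefficients a_k. Then for every integer k ≥ 1, a_k = (P/(π² k²)) Σ_{j=1}^{P−1} F_j sin(kπj/P), where F_j = 2N_j − N_{j+1} − N_{j−1}. -/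
/-!
On each unit interval `[l, l + 1]` the rank function is affine, so with `c = kπ/P` the integral
of `R(η) sin(cη)` over it equals the increment of `-R(η) cos(cη)/c + R' sin(cη)/c²`. The cosine
terms telescope to `0` because `R` is continuous and vanishes at `0` and `P`. The sine terms are
`Σ_l (N_{l+1} - N_l)(sin(c(l+1)) - sin(cl))/c²`; as `sin` vanishes at `0` and at `cP = kπ`,
summation by parts turns them into `Σ_j F_j sin(cj)/c²`, the second differences of `N` being
`-F_j`.
-/

open MeasureTheory Finset Real

theorem sum_range_sub_mul_sub_eq_sum_Icc_add {α : Type*} [CommRing α] (u v : ℕ → α) (n : ℕ) :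
    ∑ l ∈ range (n + 1), (u (l + 1) - u l) * (v (l + 1) - v l) =
      ∑ j ∈ Icc 1 n, (2 * u j - u (j + 1) - u (j - 1)) * v j
        + (u (n + 1) - u n) * v (n + 1) - (u 1 - u 0) * v 0 := by
  induction n with
  | zero =>
    simp only [zero_add, range_one, sum_singleton, Order.lt_one_iff, Icc_eq_empty_of_lt, sum_empty]
    ring
  | succ n ih =>
    rw [sum_range_succ, ih, sum_Icc_succ_top (by omega), Nat.add_sub_cancel]
    ring

theorem sum_range_sub_mul_sub_eq_sum_Icc {α : Type*} [CommRing α] (u v : ℕ → α) {n : ℕ}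
    (hv0 : v 0 = 0) (hvn : v n = 0) :
    ∑ l ∈ range n, (u (l + 1) - u l) * (v (l + 1) - v l) =
      ∑ j ∈ Icc 1 (n - 1), (2 * u j - u (j + 1) - u (j - 1)) * v j := by
  cases n with
  | zero => simp
  | succ n => rw [sum_range_sub_mul_sub_eq_sum_Icc_add, hv0, hvn, Nat.add_sub_cancel]; ring

theorem integral_eq_sum_integral_of_eqOn_Icc {E : Type*} [NormedAddCommGroup E]
    [NormedSpace ℝ E] {f : ℝ → E} {g : ℕ → ℝ → E} {n : ℕ}
    (hg : ∀ l < n, IntervalIntegrable (g l) volume l (l + 1))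
    (hfg : ∀ l < n, Set.EqOn f (g l) (Set.Icc l (l + 1))) :
    ∫ x in (0 : ℝ)..n, f x = ∑ l ∈ range n, ∫ x in (l : ℝ)..l + 1, g l x := by
  have hfg' : ∀ l < n, Set.EqOn f (g l) (Set.uIcc l (l + 1)) := fun l hl => by
    rw [Set.uIcc_of_le (lt_add_one (l : ℝ)).le]; exact hfg l hl
  have hf : ∀ l < n, IntervalIntegrable f volume l (l + 1) := fun l hl =>
    (hg l hl).congr fun x hx => (hfg' l hl (Set.uIoc_subset_uIcc hx)).symm
  have hpiece : ∀ l < n, ∫ x in (l : ℝ)..l + 1, f x = ∫ x in (l : ℝ)..l + 1, g l x :=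
    fun l hl => intervalIntegral.integral_congr (hfg' l hl)
  rw [← Nat.cast_zero, ← intervalIntegral.sum_integral_adjacent_intervals (a := Nat.cast)
    (by exact_mod_cast hf)]
  exact sum_congr rfl fun l hl => by exact_mod_cast hpiece l (mem_range.mp hl)

theorem integral_affine_mul_sin {c : ℝ} (hc : c ≠ 0) (a A B : ℝ) :
    ∫ η in a..a + 1, (A + (B - A) * (η - a)) * sin (c * η) =
      (A * cos (c * a) - B * cos (c * (a + 1))) / c
        + (B - A) * (sin (c * (a + 1)) - sin (c * a)) / c ^ 2 := by
  have hderiv : ∀ x, HasDerivAt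
      (fun η => -(A + (B - A) * (η - a)) * cos (c * η) / c + (B - A) * sin (c * η) / c ^ 2)
      ((A + (B - A) * (x - a)) * sin (c * x)) x := by
    intro x
    have hlin : HasDerivAt (fun η => c * η) c x := by simpa using (hasDerivAt_id x).const_mul c
    have haff : HasDerivAt (fun η => A + (B - A) * (η - a)) (B - A) x := by
      simpa using (((hasDerivAt_id x).sub_const a).const_mul (B - A)).const_add A
    have hcos : HasDerivAt (fun η => cos (c * η)) (-sin (c * x) * c) x :=
      (hasDerivAt_cos (c * x)).comp x hlin
    have hsin : HasDerivAt (fun η => sin (c * η)) (cos (c * x) * c) x :=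
      (hasDerivAt_sin (c * x)).comp x hlin
    refine ((haff.neg.mul hcos).div_const c |>.add
      ((hsin.const_mul (B - A)).div_const (c ^ 2))).congr_deriv ?_
    simp only [Pi.neg_apply]
    field_simp
    ring
  rw [intervalIntegral.integral_eq_sub_of_hasDerivAt (fun x _ => hderiv x)
    (by apply Continuous.intervalIntegrable; fun_prop)]
  ring

/-- The Fourier sine coefficients of the piecewise linear rank function are
`a_k = (P/(π²k²)) Σ_{j=1}^{P−1} F_j sin(kπj/P)` with `F_j = 2N_j − N_{j+1} − N_{j−1}`. -/
theorem stmt4 (P : ℕ) (hP : 2 ≤ P) (N : ℕ → ℝ) (hN0 : N 0 = 0) (hNP : N P = 0)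
    (R : ℝ → ℝ)
    (hR : ∀ l : ℕ, l < P → ∀ η ∈ Set.Icc (l : ℝ) ((l : ℝ) + 1),
      R η = N l + (N (l + 1) - N l) * (η - l))
    (a : ℕ → ℝ)
    (ha : ∀ k : ℕ, a k = (1 / (P : ℝ)) *
      ∫ η in (0 : ℝ)..(P : ℝ), R η * Real.sin ((k : ℝ) * Real.pi * η / P)) :
    ∀ k : ℕ, 1 ≤ k →
      a k = ((P : ℝ) / (Real.pi ^ 2 * (k : ℝ) ^ 2)) *
        ∑ j ∈ Finset.Icc 1 (P - 1),
          (2 * N j - N (j + 1) - N (j - 1)) * Real.sin ((k : ℝ) * Real.pi * (j : ℝ) / P) := by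
  intro k hk
  have hP0 : (P : ℝ) ≠ 0 := by exact_mod_cast (by omega : P ≠ 0)
  have hk0 : (k : ℝ) ≠ 0 := by exact_mod_cast (by omega : k ≠ 0)
  set c : ℝ := k * π / P with hc_def
  have hc : c ≠ 0 := div_ne_zero (mul_ne_zero hk0 pi_ne_zero) hP0
  have harg : ∀ x : ℝ, k * π * x / P = c * x := fun x => by rw [hc_def]; ring
  have hsin_P : sin (c * P) = 0 := by
    rw [hc_def, div_mul_cancel₀ _ hP0]; exact sin_nat_mul_pi k
  have htelescope : ∑ l ∈ range P, (N l * cos (c * l) - N (l + 1) * cos (c * (l + 1))) = 0 := by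
    simpa [hN0, hNP] using sum_range_sub' (fun j : ℕ => N j * cos (c * j)) P
  have hparts : ∑ l ∈ range P, (N (l + 1) - N l) * (sin (c * (l + 1)) - sin (c * l)) =
      ∑ j ∈ Icc 1 (P - 1), (2 * N j - N (j + 1) - N (j - 1)) * sin (c * j) := by
    simpa using sum_range_sub_mul_sub_eq_sum_Icc N (fun j => sin (c * j)) (by simp) hsin_P
  simp_rw [ha k, harg]
  rw [integral_eq_sum_integral_of_eqOn_Icc
    (g := fun l η => (N l + (N (l + 1) - N l) * (η - l)) * sin (c * η))
    (fun l _ => (by fun_prop : Continuous _).intervalIntegrable _ _)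
    (fun l hl η hη => by simp only [hR l hl η hη])]
  simp_rw [integral_affine_mul_sin hc]
  rw [sum_add_distrib, ← sum_div, ← sum_div, htelescope, hparts, zero_div, zero_add, hc_def]
  field_simp
end

section
/- Fix a real number P > 0, an integer K ≥ 1 and real numbers a_1, …, a_K. Define V̂(σ,η) = Σ_{k=1}^K a_k cos(kπη/P) e^{−kπ|σ|/P}. Then the double integral of −σ (∂_η V̂)(∂²_{ση} V̂) over (σ,η) ∈ (ℝ ∖ {0}) × [0, P] exists and equals (π/4) Σ_{k=1}^K k a_k². -/
open MeasureTheory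

/-!
With `ω_k = kπ/P` the potential is a finite sum of separable terms, so for `σ ≠ 0`
`∂_η V̂ = -Σ a_k ω_k sin(ω_k η) e^{-ω_k|σ|}` and
`∂²_{ση} V̂ = Σ a_k ω_k² sign σ sin(ω_k η) e^{-ω_k|σ|}`.
Since `σ sign σ = |σ|`, the integrand is a double sum of products `f(σ) g(η)`, and each term
factorises: `∫_ℝ |σ| e^{-(ω_j+ω_k)|σ|} dσ = 2/(ω_j+ω_k)²` (a Gamma integral), while orthogonality
of the sines on `[0,P]` kills `j ≠ k` and gives `P/2` for `j = k`. The diagonal term is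
`a_k² ω_k³ · 2/(2ω_k)² · P/2 = (π/4) k a_k²`.
-/

open Real Set

theorem integrable_comp_abs {E : Type*} [NormedAddCommGroup E] {f : ℝ → E}
    (hf : IntegrableOn f (Ioi 0)) : Integrable (fun x => f |x|) := by
  have hIoi : IntegrableOn (fun x => f |x|) (Ioi 0) :=
    hf.congr_fun (fun x hx => by rw [abs_of_pos hx]) measurableSet_Ioi
  have hIic : IntegrableOn (fun x => f |x|) (Iic 0) := by
    rw [← Measure.map_neg_eq_self (volume : Measure ℝ)]
    let e : MeasurableEmbedding fun x : ℝ => -x := (Homeomorph.neg ℝ).measurableEmbedding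
    rw [e.integrableOn_map_iff]
    simp only [Function.comp_def, abs_neg, neg_preimage, neg_Iic, neg_zero]
    exact Iff.mpr integrableOn_Ici_iff_integrableOn_Ioi hIoi
  have h := hIic.union hIoi
  rwa [Iic_union_Ioi, integrableOn_univ] at h

theorem integrableOn_mul_exp_neg_mul_Ioi {m : ℝ} (hm : 0 < m) :
    IntegrableOn (fun x => x * exp (-(m * x))) (Ioi 0) := by
  simpa using integrableOn_rpow_mul_exp_neg_mul_rpow (by norm_num : (-1 : ℝ) < 1) one_pos hm

theorem integrable_abs_mul_exp_neg_mul_abs {m : ℝ} (hm : 0 < m) :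
    Integrable (fun x => |x| * exp (-(m * |x|))) :=
  integrable_comp_abs (integrableOn_mul_exp_neg_mul_Ioi hm)

theorem integral_abs_mul_exp_neg_mul_abs {m : ℝ} (hm : 0 < m) :
    ∫ x, |x| * exp (-(m * |x|)) = 2 / m ^ 2 := by
  have hGamma := integral_rpow_mul_exp_neg_mul_Ioi two_pos hm
  norm_num [Real.rpow_two] at hGamma
  rw [integral_comp_abs (f := fun x => x * exp (-(m * x))), hGamma]
  field_simp

theorem integral_cos_int_mul_pi_div {P : ℝ} (hP : P ≠ 0) (n : ℤ) :
    ∫ x in (0 : ℝ)..P, cos (n * π / P * x) = if n = 0 then P else 0 := by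
  split_ifs with hn
  · simp [hn]
  · have hc : (n : ℝ) * π / P ≠ 0 := by positivity
    rw [intervalIntegral.integral_comp_mul_left (fun x => cos x) hc, integral_cos,
      div_mul_cancel₀ _ hP, sin_int_mul_pi]
    simp

theorem integral_sin_mul_sin_Icc {P : ℝ} (hP : 0 < P) {j : ℕ} (hj : 0 < j) (k : ℕ) :
    ∫ x in Icc 0 P, sin (j * π / P * x) * sin (k * π / P * x) = if j = k then P / 2 else 0 := by
  have hprod (x : ℝ) : sin (j * π / P * x) * sin (k * π / P * x) =
      (cos (((j - k : ℤ) : ℝ) * π / P * x) - cos (((j + k : ℤ) : ℝ) * π / P * x)) / 2 := by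
    have hsub : ((j - k : ℤ) : ℝ) * π / P * x = j * π / P * x - k * π / P * x := by push_cast; ring
    have hadd : ((j + k : ℤ) : ℝ) * π / P * x = j * π / P * x + k * π / P * x := by push_cast; ring
    rw [hsub, hadd, cos_sub, cos_add]
    ring
  have hcos (n : ℤ) : IntervalIntegrable (fun x => cos (n * π / P * x)) volume 0 P :=
    (continuous_cos.comp (continuous_const_mul _)).intervalIntegrable 0 P
  simp_rw [integral_Icc_eq_integral_Ioc, ← intervalIntegral.integral_of_le hP.le, hprod,
    intervalIntegral.integral_div, intervalIntegral.integral_sub (hcos _) (hcos _),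
    integral_cos_int_mul_pi_div hP.ne']
  have hjk : (j : ℤ) + k ≠ 0 := by omega
  simp only [hjk, sub_eq_zero, Nat.cast_inj, if_false]
  split_ifs <;> ring

theorem integrableOn_mul_prod_Icc {f g : ℝ → ℝ} (hf : Integrable f) (hg : Continuous g)
    (A : Set ℝ) (b c : ℝ) : IntegrableOn (fun p : ℝ × ℝ => f p.1 * g p.2) (A ×ˢ Icc b c) := by
  rw [IntegrableOn, Measure.volume_eq_prod, ← Measure.prod_restrict]
  exact hf.restrict.mul_prod hg.integrableOn_Icc

theorem integrableOn_abs_mul_exp_mul_sin_mul_sin {m : ℝ} (hm : 0 < m) (u v P : ℝ) :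
    IntegrableOn (fun p : ℝ × ℝ => |p.1| * exp (-(m * |p.1|)) * (sin (u * p.2) * sin (v * p.2)))
      ({0}ᶜ ×ˢ Icc 0 P) :=
  integrableOn_mul_prod_Icc (integrable_abs_mul_exp_neg_mul_abs hm)
    (g := fun x => sin (u * x) * sin (v * x)) (by fun_prop) _ _ _

theorem setIntegral_abs_mul_exp_mul_sin_mul_sin {m : ℝ} (hm : 0 < m) (u v P : ℝ) :
    ∫ p in {0}ᶜ ×ˢ Icc 0 P, |p.1| * exp (-(m * |p.1|)) * (sin (u * p.2) * sin (v * p.2)) =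
      2 / m ^ 2 * ∫ x in Icc 0 P, sin (u * x) * sin (v * x) := by
  rw [Measure.volume_eq_prod, setIntegral_prod_mul (fun x => |x| * exp (-(m * |x|)))
    (fun x => sin (u * x) * sin (v * x)), restrict_compl_singleton,
    integral_abs_mul_exp_neg_mul_abs hm]

theorem pderivSnd_sum_mul {ι : Type*} (s : Finset ι) (F G G' : ι → ℝ → ℝ)
    (hG : ∀ i ∈ s, ∀ t, HasDerivAt (G i) (G' i t) t) :
    pderivSnd (fun q => ∑ i ∈ s, F i q.1 * G i q.2) = fun q => ∑ i ∈ s, F i q.1 * G' i q.2 :=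
  funext fun q => (HasDerivAt.fun_sum fun i hi => (hG i hi q.2).const_mul (F i q.1)).deriv

theorem pderivFst_sum_mul {ι : Type*} (s : Finset ι) (F G : ι → ℝ → ℝ) (F' : ι → ℝ) {p : ℝ × ℝ}
    (hF : ∀ i ∈ s, HasDerivAt (F i) (F' i) p.1) :
    pderivFst (fun q => ∑ i ∈ s, F i q.1 * G i q.2) p = ∑ i ∈ s, F' i * G i p.2 :=
  (HasDerivAt.fun_sum fun i hi => (hF i hi).mul_const (G i p.2)).deriv

theorem hasDerivAt_exp_neg_mul_abs (c : ℝ) {x : ℝ} (hx : x ≠ 0) :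
    HasDerivAt (fun y => exp (-(c * |y|))) (-(c * SignType.sign x) * exp (-(c * |x|))) x := by
  simpa [mul_comm] using ((hasDerivAt_abs hx).const_mul c).neg.exp

/-- `V̂` with arbitrary frequencies `ω i`; the paper's potential has `ω k = kπ/P`. -/
noncomputable def cosExpPotential {ι : Type*} (s : Finset ι) (a ω : ι → ℝ) : ℝ × ℝ → ℝ :=
  fun p => ∑ i ∈ s, a i * exp (-(ω i * |p.1|)) * cos (ω i * p.2)

noncomputable def centralChargeDensity (V : ℝ × ℝ → ℝ) : ℝ × ℝ → ℝ :=
  fun p => -p.1 * pderivSnd V p * pderivFst (pderivSnd V) p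

section CosExpPotential

variable {ι : Type*} (s : Finset ι) (a ω : ι → ℝ)

theorem pderivSnd_cosExpPotential :
    pderivSnd (cosExpPotential s a ω) =
      fun p => ∑ i ∈ s, a i * exp (-(ω i * |p.1|)) * (-(ω i) * sin (ω i * p.2)) := by
  refine pderivSnd_sum_mul s (fun i σ => a i * exp (-(ω i * |σ|))) (fun i t => cos (ω i * t))
    (fun i t => -(ω i) * sin (ω i * t)) fun i _ t => ?_
  simpa [mul_comm] using ((hasDerivAt_id t).const_mul (ω i)).cos

theorem centralChargeDensity_cosExpPotential {p : ℝ × ℝ} (hp : p.1 ≠ 0) :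
    centralChargeDensity (cosExpPotential s a ω) p =
      ∑ i ∈ s, ∑ j ∈ s, a i * a j * ω i * ω j ^ 2 *
        (|p.1| * exp (-((ω i + ω j) * |p.1|)) * (sin (ω i * p.2) * sin (ω j * p.2))) := by
  have hFst : pderivFst (pderivSnd (cosExpPotential s a ω)) p =
      ∑ j ∈ s, a j * (-(ω j * SignType.sign p.1) * exp (-(ω j * |p.1|))) *
        (-(ω j) * sin (ω j * p.2)) := by
    rw [pderivSnd_cosExpPotential]
    exact pderivFst_sum_mul s (fun j σ => a j * exp (-(ω j * |σ|)))
      (fun j t => -(ω j) * sin (ω j * t)) _ fun j _ =>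
      (hasDerivAt_exp_neg_mul_abs (ω j) hp).const_mul (a j)
  rw [centralChargeDensity, hFst, pderivSnd_cosExpPotential, mul_assoc, Finset.sum_mul_sum,
    Finset.mul_sum]
  refine Finset.sum_congr rfl fun i _ => Finset.mul_sum _ _ _ |>.trans <|
    Finset.sum_congr rfl fun j _ => ?_
  rw [add_mul, neg_add, exp_add, ← self_mul_sign p.1]
  ring

theorem eqOn_centralChargeDensity_cosExpPotential (P : ℝ) :
    EqOn (centralChargeDensity (cosExpPotential s a ω))
      (fun p => ∑ i ∈ s, ∑ j ∈ s, a i * a j * ω i * ω j ^ 2 *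
        (|p.1| * exp (-((ω i + ω j) * |p.1|)) * (sin (ω i * p.2) * sin (ω j * p.2))))
      ({0}ᶜ ×ˢ Icc 0 P) :=
  fun _ hp => centralChargeDensity_cosExpPotential s a ω hp.1

variable {s ω}

theorem integrableOn_centralChargeDensity_cosExpPotential (hω : ∀ i ∈ s, 0 < ω i) (P : ℝ) :
    IntegrableOn (centralChargeDensity (cosExpPotential s a ω)) ({0}ᶜ ×ˢ Icc 0 P) := by
  refine IntegrableOn.congr_fun ?_ (eqOn_centralChargeDensity_cosExpPotential s a ω P).symm
    ((measurableSet_singleton 0).compl.prod measurableSet_Icc)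
  refine integrable_finsetSum _ fun i hi => integrable_finsetSum _ fun j hj => ?_
  exact (integrableOn_abs_mul_exp_mul_sin_mul_sin (add_pos (hω i hi) (hω j hj)) _ _ P).const_mul _

theorem setIntegral_centralChargeDensity_cosExpPotential (hω : ∀ i ∈ s, 0 < ω i) (P : ℝ) :
    ∫ p in {0}ᶜ ×ˢ Icc 0 P, centralChargeDensity (cosExpPotential s a ω) p =
      ∑ i ∈ s, ∑ j ∈ s, a i * a j * ω i * ω j ^ 2 *
        (2 / (ω i + ω j) ^ 2 * ∫ x in Icc 0 P, sin (ω i * x) * sin (ω j * x)) := by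
  have hterm (i) (hi : i ∈ s) (j) (hj : j ∈ s) := integrableOn_abs_mul_exp_mul_sin_mul_sin
    (add_pos (hω i hi) (hω j hj)) (ω i) (ω j) P
  rw [setIntegral_congr_fun ((measurableSet_singleton 0).compl.prod measurableSet_Icc)
    (eqOn_centralChargeDensity_cosExpPotential s a ω P),
    integral_finsetSum _ fun i hi =>
      integrable_finsetSum _ fun j hj => (hterm i hi j hj).const_mul _]
  refine Finset.sum_congr rfl fun i hi => ?_
  rw [integral_finsetSum _ fun j hj => (hterm i hi j hj).const_mul _]
  refine Finset.sum_congr rfl fun j hj => ?_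
  rw [integral_const_mul, setIntegral_abs_mul_exp_mul_sin_mul_sin (add_pos (hω i hi) (hω j hj))]

end CosExpPotential

theorem stmt6_general (P : ℝ) (hP : 0 < P) (K : ℕ) (a : ℕ → ℝ)
    (Vhat : ℝ × ℝ → ℝ)
    (hV : Vhat = fun p => ∑ k ∈ Finset.Icc 1 K,
      a k * Real.cos ((k : ℝ) * Real.pi * p.2 / P) *
        Real.exp (-((k : ℝ) * Real.pi * |p.1| / P))) :
    IntegrableOn
      (fun p : ℝ × ℝ => -p.1 * pderivSnd Vhat p * pderivFst (pderivSnd Vhat) p)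
      (({0}ᶜ : Set ℝ) ×ˢ Set.Icc (0 : ℝ) P) ∧
    ∫ p in (({0}ᶜ : Set ℝ) ×ˢ Set.Icc (0 : ℝ) P),
        -p.1 * pderivSnd Vhat p * pderivFst (pderivSnd Vhat) p
      = (Real.pi / 4) * ∑ k ∈ Finset.Icc 1 K, (k : ℝ) * a k ^ 2 := by
  have hk_pos {k : ℕ} (hk : k ∈ Finset.Icc 1 K) : 0 < k := (Finset.mem_Icc.mp hk).1
  have hω : ∀ k ∈ Finset.Icc 1 K, 0 < (k : ℝ) * π / P := fun k hk => by
    have := hk_pos hk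
    positivity
  have hV' : Vhat = cosExpPotential (Finset.Icc 1 K) a fun k => k * π / P := by
    subst hV
    funext p
    refine Finset.sum_congr rfl fun k _ => ?_
    ring_nf
  subst hV'
  refine ⟨integrableOn_centralChargeDensity_cosExpPotential a hω P, ?_⟩
  change ∫ p in _, centralChargeDensity _ p = _
  rw [setIntegral_centralChargeDensity_cosExpPotential a hω P, Finset.mul_sum]
  refine Finset.sum_congr rfl fun j hj => ?_
  simp only [integral_sin_mul_sin_Icc hP (hk_pos hj), mul_ite, mul_zero, Finset.sum_ite_eq, hj,
    if_true]
  field_simp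
  ring

/-- For the finite Fourier potential `V̂`, the integral of `−σ (∂_η V̂)(∂²_{ση} V̂)`
over `(ℝ \ {0}) × [0,P]` exists and equals `(π/4) Σ_{k=1}^K k a_k²`. -/
theorem stmt6 (P : ℝ) (hP : 0 < P) (K : ℕ) (hK : 1 ≤ K) (a : ℕ → ℝ)
    (Vhat : ℝ × ℝ → ℝ)
    (hV : Vhat = fun p => ∑ k ∈ Finset.Icc 1 K,
      a k * Real.cos ((k : ℝ) * Real.pi * p.2 / P) *
        Real.exp (-((k : ℝ) * Real.pi * |p.1| / P))) :
    IntegrableOn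
      (fun p : ℝ × ℝ => -p.1 * pderivSnd Vhat p * pderivFst (pderivSnd Vhat) p)
      (({0}ᶜ : Set ℝ) ×ˢ Set.Icc (0 : ℝ) P) ∧
    ∫ p in (({0}ᶜ : Set ℝ) ×ˢ Set.Icc (0 : ℝ) P),
        -p.1 * pderivSnd Vhat p * pderivFst (pderivSnd Vhat) p
      = (Real.pi / 4) * ∑ k ∈ Finset.Icc 1 K, (k : ℝ) * a k ^ 2 :=
  stmt6_general P hP K a Vhat hV
end

section
/- Fix a real number N > 0 and an even integer P = 2S with S ≥ 1, and let a_k = (N P²/((P − S) π² k²)) sin(kπS/P) be the Fourier sine coefficients of the triangular rank function. Then the holographic central charge is exactly (π/8) Σ_{k=1}^∞ k a_k² = 7 N² P² ζ(3)/(16 π³), where ζ(3) = Σ_{n=1}^∞ 1/n³. -/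
/-!
For `P = 2S` the coefficients collapse to `a_k = (4NS/π²) sin(kπ/2)/k²`, so `k a_k²` vanishes for
even `k` and equals `(4NS/π²)²/k³` for odd `k`. Splitting `ζ(3)` into its odd and even parts, the
even part is `ζ(3)/8`, hence the odd part is `7ζ(3)/8`.
-/

open Real

theorem tsum_one_div_two_mul_add_one_pow {p : ℕ} (hp : 1 < p) :
    ∑' k : ℕ, 1 / (2 * (k : ℝ) + 1) ^ p
      = (1 - 1 / 2 ^ p) * ∑' n : ℕ, 1 / ((n : ℝ) + 1) ^ p := by
  set f : ℕ → ℝ := fun n ↦ 1 / ((n : ℝ) + 1) ^ p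
  have hf : Summable f := by
    simpa [f] using (summable_nat_add_iff 1).2 (Real.summable_one_div_nat_pow.2 hp)
  have hodd : ∀ k : ℕ, f (2 * k + 1) = 1 / 2 ^ p * f k := by
    intro k
    simp only [f]
    push_cast
    rw [show 2 * (k : ℝ) + 1 + 1 = 2 * (k + 1) by ring, mul_pow, one_div_mul_one_div]
  have hsplit := tsum_even_add_odd
    (hf.comp_injective (mul_right_injective₀ two_ne_zero))
    (hf.comp_injective ((add_left_injective 1).comp (mul_right_injective₀ two_ne_zero)))
  rw [tsum_congr hodd, tsum_mul_left] at hsplit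
  have heven : ∀ k : ℕ, f (2 * k) = 1 / (2 * (k : ℝ) + 1) ^ p := fun k ↦ by simp [f]
  rw [← tsum_congr heven]
  linear_combination hsplit

theorem sin_add_one_mul_pi_div_two_eq_zero_of_odd {k : ℕ} (hk : Odd k) :
    sin (((k : ℝ) + 1) * π / 2) = 0 := by
  obtain ⟨m, rfl⟩ := hk
  rw [show ((2 * m + 1 : ℕ) + 1 : ℝ) * π / 2 = (m + 1 : ℕ) * π by push_cast; ring]
  exact sin_nat_mul_pi _

theorem sin_sq_two_mul_add_one_mul_pi_div_two (m : ℕ) :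
    sin ((2 * (m : ℝ) + 1) * π / 2) ^ 2 = 1 := by
  rw [show (2 * (m : ℝ) + 1) * π / 2 = m * π + π / 2 by ring, sin_add_pi_div_two,
    cos_nat_mul_pi, ← pow_mul, mul_comm, pow_mul]
  norm_num

theorem tsum_sin_sq_mul_pi_div_two_div_pow (p : ℕ) :
    ∑' k : ℕ, sin (((k : ℝ) + 1) * π / 2) ^ 2 / ((k : ℝ) + 1) ^ p
      = ∑' m : ℕ, 1 / (2 * (m : ℝ) + 1) ^ p := by
  rw [← (mul_right_injective₀ (two_ne_zero' ℕ)).tsum_eq]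
  · refine tsum_congr fun m ↦ ?_
    push_cast
    rw [sin_sq_two_mul_add_one_mul_pi_div_two]
  · intro k hk
    obtain ⟨m, rfl⟩ | hodd := Nat.even_or_odd k
    · exact ⟨m, two_mul m⟩
    · simp [sin_add_one_mul_pi_div_two_eq_zero_of_odd hodd] at hk

theorem triangular_sine_coeff_of_eq_two_mul (N : ℝ) (S k : ℕ) :
    N * ((2 * S : ℕ) : ℝ) ^ 2 / ((((2 * S : ℕ) : ℝ) - S) * π ^ 2 * (k : ℝ) ^ 2)
        * sin (k * π * S / (2 * S : ℕ))
      = 4 * N * S / π ^ 2 * sin (k * π / 2) / (k : ℝ) ^ 2 := by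
  rcases eq_or_ne S 0 with rfl | hS
  · simp
  have hS' : (S : ℝ) ≠ 0 := Nat.cast_ne_zero.2 hS
  push_cast
  rw [show 2 * (S : ℝ) - S = S by ring, show (k : ℝ) * π * S / (2 * S) = k * π / 2 by
    field_simp]
  field_simp
  ring

theorem stmt11_general (N : ℝ) (S P : ℕ) (hP : P = 2 * S)
    (a : ℕ → ℝ)
    (ha : ∀ k : ℕ, a k = N * (P : ℝ) ^ 2 / (((P : ℝ) - (S : ℝ)) * Real.pi ^ 2 * (k : ℝ) ^ 2) *
      Real.sin ((k : ℝ) * Real.pi * (S : ℝ) / P)) :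
    (Real.pi / 8) * ∑' k : ℕ, ((k : ℝ) + 1) * a (k + 1) ^ 2
      = 7 * N ^ 2 * (P : ℝ) ^ 2 * (∑' n : ℕ, 1 / ((n : ℝ) + 1) ^ 3) / (16 * Real.pi ^ 3) := by
  subst hP
  have hterm : ∀ k : ℕ, ((k : ℝ) + 1) * a (k + 1) ^ 2
      = (4 * N * S / π ^ 2) ^ 2 * (sin (((k : ℝ) + 1) * π / 2) ^ 2 / ((k : ℝ) + 1) ^ 3) := by
    intro k
    rw [ha, triangular_sine_coeff_of_eq_two_mul]
    push_cast
    field_simp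
  rw [tsum_congr hterm, tsum_mul_left, tsum_sin_sq_mul_pi_div_two_div_pow,
    tsum_one_div_two_mul_add_one_pow (by norm_num)]
  push_cast
  field_simp
  ring

/-- For the symmetric triangular quiver (`P = 2S`) the holographic central charge is
exactly `7 N² P² ζ(3)/(16π³)`, where `ζ(3) = Σ_{n≥1} 1/n³`. -/
theorem stmt11 (N : ℝ) (hN : 0 < N) (S P : ℕ) (hS : 1 ≤ S) (hP : P = 2 * S)
    (a : ℕ → ℝ)
    (ha : ∀ k : ℕ, a k = N * (P : ℝ) ^ 2 / (((P : ℝ) - (S : ℝ)) * Real.pi ^ 2 * (k : ℝ) ^ 2) *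
      Real.sin ((k : ℝ) * Real.pi * (S : ℝ) / P)) :
    (Real.pi / 8) * ∑' k : ℕ, ((k : ℝ) + 1) * a (k + 1) ^ 2
      = 7 * N ^ 2 * (P : ℝ) ^ 2 * (∑' n : ℕ, 1 / ((n : ℝ) + 1) ^ 3) / (16 * Real.pi ^ 3) :=
  stmt11_general N S P hP a ha
end

section
/- The function G(x) = Σ_{k=1}^∞ (1 − cos(kx))/k³, defined for x > 0, satisfies lim_{x → 0⁺} G(x)/(x² log(1/x)) = 1/2. -/
open Filter Finset Real Topology

/-! Split the series at `K = ⌊1/x⌋`. For `k ≤ K` the argument `kx` is at most `1`, so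
`1 - cos (kx) = (kx)²/2 + O((kx)⁴)` and the head of the series is `x²/2 · H_K + O(x²)`,
where the harmonic number `H_K` is `log (1/x) + O(1)`. Each tail term is at most `2/k³`,
which is dominated by the telescoping difference `1/(k-1)² - 1/k²`, so the tail is
`O(1/K²) = O(x²)`. Hence `G(x) = x²/2 · log (1/x) + O(x²)`. -/

lemma one_sub_cos_mul_div_pow_three_le {n : ℝ} (hn : 0 < n) (x : ℝ) :
    (1 - cos (n * x)) / n ^ 3 ≤ x ^ 2 / 2 * n⁻¹ := by
  rw [div_le_iff₀ (by positivity)]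
  have : x ^ 2 / 2 * n⁻¹ * n ^ 3 = (n * x) ^ 2 / 2 := by field_simp
  linarith [one_sub_sq_div_two_le_cos (x := n * x)]

lemma le_one_sub_cos_mul_div_pow_three {n x : ℝ} (hn : 0 < n) (hnx : |n * x| ≤ 1) :
    x ^ 2 / 2 * n⁻¹ - 5 / 96 * x ^ 4 * n ≤ (1 - cos (n * x)) / n ^ 3 := by
  rw [le_div_iff₀ (by positivity)]
  have : (x ^ 2 / 2 * n⁻¹ - 5 / 96 * x ^ 4 * n) * n ^ 3 =
      (n * x) ^ 2 / 2 - |n * x| ^ 4 * (5 / 96) := by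
    rw [pow_abs, abs_of_nonneg (by positivity)]; field_simp
  linarith [(abs_le.1 (cos_bound hnx)).2]

lemma one_sub_cos_mul_div_pow_three_le_two_div {n : ℝ} (hn : 0 < n) (x : ℝ) :
    (1 - cos (n * x)) / n ^ 3 ≤ 2 / n ^ 3 := by
  gcongr
  linarith [neg_one_le_cos (n * x)]

lemma two_div_pow_three_le_inv_sq_sub {m : ℝ} (hm : 0 < m) :
    2 / (m + 1) ^ 3 ≤ 1 / m ^ 2 - 1 / (m + 1) ^ 2 := by
  rw [div_sub_div _ _ (by positivity) (by positivity),
    div_le_div_iff₀ (by positivity) (by positivity)]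
  nlinarith [sq_nonneg m, sq_nonneg (m + 1)]

lemma tsum_nat_add_le_inv_sq {f : ℕ → ℝ} (hf0 : ∀ k, 0 ≤ f k)
    (hf : ∀ k, f k ≤ 2 / ((k : ℝ) + 1) ^ 3) {K : ℕ} (hK : 0 < K) :
    ∑' j, f (j + K) ≤ 1 / (K : ℝ) ^ 2 := by
  set a : ℕ → ℝ := fun j => 1 / ((j + K : ℕ) : ℝ) ^ 2
  have hstep (j : ℕ) : f (j + K) ≤ a j - a (j + 1) := by
    have hpos : (0 : ℝ) < (j + K : ℕ) := by exact_mod_cast Nat.add_pos_right j hK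
    have := (hf _).trans (two_div_pow_three_le_inv_sq_sub hpos)
    simp only [a, Nat.cast_add, Nat.cast_one] at this ⊢
    rwa [add_right_comm _ (1 : ℝ)]
  refine Real.tsum_le_of_sum_range_le (fun j => hf0 _) fun n => ?_
  calc ∑ j ∈ range n, f (j + K) ≤ ∑ j ∈ range n, (a j - a (j + 1)) :=
        sum_le_sum fun j _ => hstep j
    _ = a 0 - a n := sum_range_sub' a n
    _ ≤ 1 / (K : ℝ) ^ 2 := by simp only [a, zero_add]; linarith [show 0 ≤ a n by positivity]

noncomputable def gTerm (x : ℝ) (k : ℕ) : ℝ :=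
  (1 - cos (((k : ℝ) + 1) * x)) / ((k : ℝ) + 1) ^ 3

noncomputable def G (x : ℝ) : ℝ := ∑' k, gTerm x k

lemma gTerm_nonneg (x : ℝ) (k : ℕ) : 0 ≤ gTerm x k :=
  div_nonneg (by linarith [cos_le_one (((k : ℝ) + 1) * x)]) (by positivity)

lemma gTerm_le (x : ℝ) (k : ℕ) : gTerm x k ≤ 2 / ((k : ℝ) + 1) ^ 3 :=
  one_sub_cos_mul_div_pow_three_le_two_div (by positivity) x

lemma summable_gTerm (x : ℝ) : Summable (gTerm x) := by
  have h : Summable fun k : ℕ => 2 / ((k : ℝ) + 1) ^ 3 := by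
    simpa [div_eq_mul_inv] using
      ((summable_nat_add_iff 1).2 (summable_nat_pow_inv.2 (by norm_num : 1 < 3))).mul_left 2
  exact h.of_nonneg_of_le (gTerm_nonneg x) (gTerm_le x)

lemma sum_range_inv_succ_eq_harmonic (K : ℕ) :
    ∑ k ∈ range K, ((k : ℝ) + 1)⁻¹ = harmonic K := by
  simp [harmonic]

lemma sum_range_gTerm_le (x : ℝ) (K : ℕ) :
    ∑ k ∈ range K, gTerm x k ≤ x ^ 2 / 2 * (1 + log K) :=
  calc ∑ k ∈ range K, gTerm x k ≤ ∑ k ∈ range K, x ^ 2 / 2 * ((k : ℝ) + 1)⁻¹ :=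
        sum_le_sum fun k _ => one_sub_cos_mul_div_pow_three_le (by positivity) x
    _ = x ^ 2 / 2 * harmonic K := by rw [← mul_sum, sum_range_inv_succ_eq_harmonic]
    _ ≤ x ^ 2 / 2 * (1 + log K) := by gcongr; exact harmonic_le_one_add_log K

lemma le_sum_range_gTerm {x : ℝ} (hx : 0 ≤ x) {K : ℕ} (hKx : K * x ≤ 1) :
    x ^ 2 / 2 * log (K + 1) - 5 / 96 * x ^ 2 ≤ ∑ k ∈ range K, gTerm x k := by
  have hsmall {k : ℕ} (hk : k ∈ range K) : ((k : ℝ) + 1) * x ≤ 1 := by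
    have : (k : ℝ) + 1 ≤ K := by exact_mod_cast mem_range.1 hk
    nlinarith
  have hterm {k : ℕ} (hk : k ∈ range K) :
      x ^ 2 / 2 * ((k : ℝ) + 1)⁻¹ - 5 / 96 * x ^ 3 ≤ gTerm x k := by
    refine le_trans ?_ (le_one_sub_cos_mul_div_pow_three (by positivity)
      (abs_le.2 ⟨by nlinarith [hsmall hk], hsmall hk⟩))
    nlinarith [hsmall hk, pow_nonneg hx 3]
  calc x ^ 2 / 2 * log (K + 1) - 5 / 96 * x ^ 2
      ≤ x ^ 2 / 2 * harmonic K - K * (5 / 96 * x ^ 3) := by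
        have := log_add_one_le_harmonic K
        push_cast at this
        have : K * (5 / 96 * x ^ 3) ≤ 5 / 96 * x ^ 2 := by nlinarith [pow_nonneg hx 2]
        gcongr
    _ = ∑ k ∈ range K, (x ^ 2 / 2 * ((k : ℝ) + 1)⁻¹ - 5 / 96 * x ^ 3) := by
        simp [sum_sub_distrib, ← mul_sum, sum_range_inv_succ_eq_harmonic]
    _ ≤ ∑ k ∈ range K, gTerm x k := sum_le_sum fun k hk => hterm hk

lemma abs_G_sub_le {x : ℝ} (hx0 : 0 < x) (hx1 : x ≤ 1) :
    |G x - x ^ 2 / 2 * log x⁻¹| ≤ 5 * x ^ 2 := by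
  set K := ⌊x⁻¹⌋₊
  have hK1 : 1 ≤ K := Nat.le_floor (by simpa using one_le_inv₀ hx0 |>.2 hx1)
  have hK0 : (0 : ℝ) < K := by exact_mod_cast hK1
  have hKle : (K : ℝ) ≤ x⁻¹ := Nat.floor_le (by positivity)
  have hKlt : x⁻¹ < K + 1 := Nat.lt_floor_add_one _
  have hKx : K * x ≤ 1 := by simpa [hx0.ne'] using mul_le_mul_of_nonneg_right hKle hx0.le
  have htail_le : ∑' j, gTerm x (j + K) ≤ 4 * x ^ 2 := by
    refine (tsum_nat_add_le_inv_sq (gTerm_nonneg x) (gTerm_le x) hK1).trans ?_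
    -- `2K ≥ K + 1 > 1/x`
    rw [div_le_iff₀ (by positivity)]
    have : 1 ≤ 2 * K * x := by
      have := (inv_lt_iff_one_lt_mul₀ hx0).1 hKlt
      have : (1 : ℝ) ≤ K := by exact_mod_cast hK1
      nlinarith
    nlinarith
  have htail_nonneg : 0 ≤ ∑' j, gTerm x (j + K) := tsum_nonneg fun j => gTerm_nonneg x _
  have hsplit : G x = ∑ k ∈ range K, gTerm x k + ∑' j, gTerm x (j + K) :=
    ((summable_gTerm x).sum_add_tsum_nat_add K).symm
  have hlogK : log K ≤ log x⁻¹ := log_le_log hK0 hKle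
  have hlogK1 : log x⁻¹ ≤ log (K + 1) := log_le_log (by positivity) hKlt.le
  have hupper := sum_range_gTerm_le x K
  have hlower := le_sum_range_gTerm hx0.le hKx
  have hx2 : 0 ≤ x ^ 2 / 2 := by positivity
  rw [abs_sub_le_iff]
  constructor <;> nlinarith [mul_le_mul_of_nonneg_left hlogK hx2,
    mul_le_mul_of_nonneg_left hlogK1 hx2]

/-- The function `G(x) = Σ_{k≥1} (1 − cos(kx))/k³` satisfies
`G(x)/(x² log(1/x)) → 1/2` as `x → 0⁺`. -/
theorem stmt12 :
    Tendsto (fun x : ℝ =>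
        (∑' k : ℕ, (1 - Real.cos (((k : ℝ) + 1) * x)) / ((k : ℝ) + 1) ^ 3) /
          (x ^ 2 * Real.log (1 / x)))
      (nhdsWithin 0 (Set.Ioi 0)) (nhds (1 / 2)) := by
  have hlog : Tendsto (fun x : ℝ => log x⁻¹) (𝓝[>] 0) atTop :=
    tendsto_log_atTop.comp tendsto_inv_nhdsGT_zero
  have hsmall : ∀ᶠ x in 𝓝[>] (0 : ℝ), x ∈ Set.Ioo 0 1 := Ioo_mem_nhdsGT one_pos
  have hlog_pos := hlog.eventually_gt_atTop 0
  have herror : Tendsto (fun x => (G x - x ^ 2 / 2 * log x⁻¹) / (x ^ 2 * log x⁻¹))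
      (𝓝[>] 0) (𝓝 0) := by
    refine squeeze_zero_norm' ?_ (hlog.const_div_atTop 5)
    filter_upwards [hsmall, hlog_pos] with x ⟨hx0, hx1⟩ hL
    rw [norm_div, norm_mul, Real.norm_eq_abs, Real.norm_eq_abs, Real.norm_eq_abs, abs_of_pos hL,
      abs_of_nonneg (sq_nonneg x), div_le_div_iff₀ (by positivity) hL]
    nlinarith [abs_G_sub_le hx0 hx1.le]
  rw [← add_zero (1 / 2 : ℝ)]
  refine (herror.const_add (1 / 2)).congr' ?_
  filter_upwards [self_mem_nhdsWithin, hlog_pos] with x hx0 hL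
  change _ = G x / (x ^ 2 * log (1 / x))
  rw [one_div x]
  have : x ≠ 0 := hx0.ne'
  generalize log x⁻¹ = L at hL ⊢
  field_simp
  ring
end
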